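/- The Z-linear map from T = U^2 ⊕ ⟨-2⟩ to U^3 sending the two copies of U identically to the first two copies of U in U^3 and sending the generator of ⟨-2⟩ to e_1^3 - e_2^3 is a primitive isometric embedding of lattices. -/
import Mathlib


/-- The bilinear form of T = U² ⊕ ⟨-2⟩ on ℤ⁵. -/
def bT1 (x y : Fin 5 → ℤ) : ℤ :=
  x 0 * y 1 + x 1 * y 0 + x 2 * y 3 + x 3 * y 2 - 2 * (x 4 * y 4)

/-- The bilinear form of U³ on ℤ⁶, coordinates (e₁¹,e₂¹,e₁²,e₂²,e₁³,e₂³). -/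
def bU3 (x y : Fin 6 → ℤ) : ℤ :=
  x 0 * y 1 + x 1 * y 0 + x 2 * y 3 + x 3 * y 2 + x 4 * y 5 + x 5 * y 4

@[simp] lemma cons_val_five' {α : Type*} (x : α) (u : Fin 5 → α) :
    Matrix.vecCons x u 5 =
      Matrix.vecHead (Matrix.vecTail (Matrix.vecTail (Matrix.vecTail (Matrix.vecTail u)))) := rfl

/-- The embedding map as a linear map. -/
def ψ₀ : (Fin 5 → ℤ) →ₗ[ℤ] (Fin 6 → ℤ) where
  toFun x := ![x 0, x 1, x 2, x 3, x 4, -x 4]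
  map_add' x y := by
    funext i
    fin_cases i <;> simp [Matrix.vecHead, Matrix.vecTail] <;> ring
  map_smul' c x := by
    funext i
    fin_cases i <;> simp [Matrix.vecHead, Matrix.vecTail] <;> ring

/-- The "sum of last two coordinates" map. -/
def φ₀ : (Fin 6 → ℤ) →ₗ[ℤ] ℤ where
  toFun x := x 4 + x 5
  map_add' x y := by simp; ring
  map_smul' c x := by simp; ring

lemma range_eq : LinearMap.range ψ₀ = LinearMap.ker φ₀ := by
  ext v
  constructor
  · rintro ⟨x, rfl⟩
    simp [ψ₀, φ₀, Matrix.vecHead, Matrix.vecTail]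
  · intro hv
    simp only [LinearMap.mem_ker, φ₀, LinearMap.coe_mk, AddHom.coe_mk] at hv
    refine ⟨![v 0, v 1, v 2, v 3, v 4], ?_⟩
    funext i
    fin_cases i <;> simp [ψ₀, Matrix.vecHead, Matrix.vecTail] <;> omega

/-- The map U² ⊕ ⟨-2⟩ → U³ sending U² identically to the first two copies of U
and the generator of ⟨-2⟩ to e₁³ - e₂³ is a primitive isometric embedding. -/
theorem primitive_embedding_T_into_U3 :
    ∃ ψ : (Fin 5 → ℤ) →ₗ[ℤ] (Fin 6 → ℤ),
      (∀ x : Fin 5 → ℤ, ψ x = ![x 0, x 1, x 2, x 3, x 4, -x 4]) ∧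
      Function.Injective ψ ∧
      (∀ x y : Fin 5 → ℤ, bU3 (ψ x) (ψ y) = bT1 x y) ∧
      Module.Free ℤ ((Fin 6 → ℤ) ⧸ LinearMap.range ψ) := by
  refine ⟨ψ₀, fun x => rfl, ?_, ?_, ?_⟩
  · intro x y h
    funext i
    have h' := congrFun h
    fin_cases i
    · exact h' 0
    · exact h' 1
    · exact h' 2
    · exact h' 3
    · exact h' 4
  · intro x y
    simp [ψ₀, bU3, bT1, Matrix.vecHead, Matrix.vecTail]
    ring
  · have hsurj : Function.Surjective φ₀ := by
      intro n
      exact ⟨![0, 0, 0, 0, 0, n], by simp [φ₀, Matrix.vecHead, Matrix.vecTail]⟩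
    have e : ((Fin 6 → ℤ) ⧸ LinearMap.range ψ₀) ≃ₗ[ℤ] ℤ :=
      (Submodule.quotEquivOfEq _ _ range_eq).trans (φ₀.quotKerEquivOfSurjective hsurj)
    exact Module.Free.of_equiv e.symm
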